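/- Let X and Y be Banach spaces, k ≥ 1, and suppose every P ∈ 𝒫(ᵏX : Y) can be approximated in norm by polynomials that strongly attain their norm. Then the set ρ̃𝒫(ᵏX) of strong norm-attainment points is a norming subset for 𝒫(ᵏX : Y): for every P ∈ 𝒫(ᵏX : Y), ‖P‖ = sup{‖P(x)‖ : x ∈ ρ̃𝒫(ᵏX)}. -/

import Mathlib

open Metric Filter Topology Set

/-- The sup norm of a function over the closed unit ball. -/
noncomputable def supNorm {X Y : Type*} [NormedAddCommGroup X] [NormedAddCommGroup Y]
    (f : X → Y) : ℝ :=
  sSup ((fun x => ‖f x‖) '' Metric.closedBall (0 : X) 1)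

/-- `f` strongly attains its (sup) norm at `x₀`: every maximizing sequence in the closed unit
ball has a subsequence converging to a unimodular multiple of `x₀`. -/
def StronglyAttains (𝕂 : Type*) [RCLike 𝕂] {X Y : Type*} [NormedAddCommGroup X]
    [NormedSpace 𝕂 X] [NormedAddCommGroup Y] (f : X → Y) (x₀ : X) : Prop :=
  ∀ xs : ℕ → X, (∀ n, xs n ∈ Metric.closedBall (0 : X) 1) →
    Tendsto (fun n => ‖f (xs n)‖) atTop (nhds (supNorm f)) →
    ∃ (α : 𝕂) (φ : ℕ → ℕ), StrictMono φ ∧ ‖α‖ = 1 ∧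
      Tendsto (fun n => xs (φ n)) atTop (nhds (α • x₀))

/-- The `k`-homogeneous polynomial associated to a continuous `k`-multilinear map. -/
noncomputable def polyEval {𝕂 : Type*} [RCLike 𝕂] {X Y : Type*} [NormedAddCommGroup X]
    [NormedSpace 𝕂 X] [NormedAddCommGroup Y] [NormedSpace 𝕂 Y] {k : ℕ}
    (L : ContinuousMultilinearMap 𝕂 (fun _ : Fin k => X) Y) : X → Y :=
  fun x => L (fun _ => x)

/-- The set `ρ̃𝒫(ᵏX)` of points of the closed unit ball at which some nonzero bounded
`k`-homogeneous scalar polynomial strongly attains its norm. -/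
def polyAttainPts (𝕂 : Type*) [RCLike 𝕂] (X : Type*) [NormedAddCommGroup X]
    [NormedSpace 𝕂 X] (k : ℕ) : Set X :=
  {x₀ | x₀ ∈ Metric.closedBall (0 : X) 1 ∧
    ∃ L : ContinuousMultilinearMap 𝕂 (fun _ : Fin k => X) 𝕂,
      polyEval L ≠ 0 ∧ StronglyAttains 𝕂 (polyEval L) x₀}

/-- Numerical radius `v(f) = sup { |x*(f x)| : (x, x*) ∈ Π(X) }`. -/
noncomputable def numRadius (𝕂 : Type*) [RCLike 𝕂] {X : Type*} [NormedAddCommGroup X]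
    [NormedSpace 𝕂 X] (f : X → X) : ℝ :=
  sSup {r | ∃ (x : X) (x' : X →L[𝕂] 𝕂), ‖x‖ = 1 ∧ ‖x'‖ = 1 ∧ x' x = 1 ∧ r = ‖x' (f x)‖}

/-- The `k`-polynomial numerical index `n^(k)(X)`. -/
noncomputable def polyNumIndex (𝕂 : Type*) [RCLike 𝕂] (X : Type*) [NormedAddCommGroup X]
    [NormedSpace 𝕂 X] (k : ℕ) : ℝ :=
  sInf {r | ∃ L : ContinuousMultilinearMap 𝕂 (fun _ : Fin k => X) X,
    supNorm (polyEval L) = 1 ∧ r = numRadius 𝕂 (polyEval L)}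

/-- The numerical index `n(X)` of a Banach space. -/
noncomputable def numIndex (𝕂 : Type*) [RCLike 𝕂] (X : Type*) [NormedAddCommGroup X]
    [NormedSpace 𝕂 X] : ℝ :=
  sInf {r | ∃ T : X →L[𝕂] X, ‖T‖ = 1 ∧ r = numRadius 𝕂 (⇑T)}

/-- `x` is an extreme point of the convex set `s` : `y + z = 2x` with `y, z ∈ s` forces
`y = z = x`. -/
def IsExtremePt {E : Type*} [AddCommGroup E] (s : Set E) (x : E) : Prop :=
  x ∈ s ∧ ∀ y ∈ s, ∀ z ∈ s, y + z = x + x → y = x ∧ z = x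

/-- `x` is a strongly exposed point of the closed unit ball. -/
def StronglyExposedPt (𝕂 : Type*) [RCLike 𝕂] {X : Type*} [NormedAddCommGroup X]
    [NormedSpace 𝕂 X] (x : X) : Prop :=
  x ∈ Metric.closedBall (0 : X) 1 ∧ ∃ x' : X →L[𝕂] 𝕂, x' ≠ 0 ∧ ‖x'‖ ≤ 1 ∧
    (∀ y ∈ Metric.closedBall (0 : X) 1, RCLike.re (x' y) ≤ RCLike.re (x' x)) ∧
    ∀ xs : ℕ → X, (∀ n, xs n ∈ Metric.closedBall (0 : X) 1) →
      Tendsto (fun n => RCLike.re (x' (xs n))) atTop (nhds (RCLike.re (x' x))) →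
      Tendsto xs atTop (nhds x)

/-- `x'` is a weak-* exposed point of the dual unit ball. -/
def WeakStarExposed (𝕂 : Type*) [RCLike 𝕂] {X : Type*} [NormedAddCommGroup X]
    [NormedSpace 𝕂 X] (x' : X →L[𝕂] 𝕂) : Prop :=
  ‖x'‖ ≤ 1 ∧ ∃ x ∈ Metric.closedBall (0 : X) 1, x' x = 1 ∧
    ∀ y' : X →L[𝕂] 𝕂, ‖y'‖ ≤ 1 → y' x = 1 → y' = x'

/-- `f` is a strong peak function at `x₀`: `f` is nonzero on the ball and every maximizing
sequence in the closed unit ball converges to `x₀`. -/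
def StrongPeakAt {X Y : Type*} [NormedAddCommGroup X] [NormedAddCommGroup Y]
    (f : X → Y) (x₀ : X) : Prop :=
  (∃ x ∈ Metric.closedBall (0 : X) 1, f x ≠ 0) ∧
    ∀ xs : ℕ → X, (∀ n, xs n ∈ Metric.closedBall (0 : X) 1) →
      Tendsto (fun n => ‖f (xs n)‖) atTop (nhds (supNorm f)) →
      Tendsto xs atTop (nhds x₀)

/-- Complex extreme point of the closed unit ball. -/
def ComplexExtremePoint {X : Type*} [NormedAddCommGroup X] [NormedSpace ℂ X] (x : X) : Prop :=
  x ∈ Metric.closedBall (0 : X) 1 ∧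
    ∀ y : X, (∀ θ : ℝ, ‖x + Complex.exp (θ * Complex.I) • y‖ ≤ 1) → y = 0

/-- Membership in `A_b(B_X : Y)`: bounded, continuous on the closed unit ball and
holomorphic on the open unit ball. -/
def MemAb {X Y : Type*} [NormedAddCommGroup X] [NormedSpace ℂ X] [NormedAddCommGroup Y]
    [NormedSpace ℂ Y] (f : X → Y) : Prop :=
  ContinuousOn f (Metric.closedBall (0 : X) 1) ∧
    (∃ C, ∀ x ∈ Metric.closedBall (0 : X) 1, ‖f x‖ ≤ C) ∧
    DifferentiableOn ℂ f (Metric.ball (0 : X) 1)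

/-- Membership in `A_u(B_X : Y)`: additionally uniformly continuous on the closed ball. -/
def MemAu {X Y : Type*} [NormedAddCommGroup X] [NormedSpace ℂ X] [NormedAddCommGroup Y]
    [NormedSpace ℂ Y] (f : X → Y) : Prop :=
  MemAb f ∧ UniformContinuousOn f (Metric.closedBall (0 : X) 1)

/-- The set `ρA_u(B_X)` of strong peak points of `A_u(B_X)`. -/
def strongPeakPtsAu (X : Type*) [NormedAddCommGroup X] [NormedSpace ℂ X] : Set X :=
  {x₀ | ∃ f : X → ℂ, MemAu f ∧ StrongPeakAt f x₀}

/-- The holomorphic numerical index `n_u(X)`. -/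
noncomputable def holNumIndex (X : Type*) [NormedAddCommGroup X] [NormedSpace ℂ X] : ℝ :=
  sInf {r | ∃ f : X → X, MemAu f ∧ supNorm f = 1 ∧ r = numRadius ℂ f}

/-! Given `P` and `ε > 0`, take `Q` with `‖P - Q‖ ≤ ε` strongly attaining its norm at `x₀`.
Evaluating `Q` along a maximizing sequence and using homogeneity gives `‖Q x₀‖ = ‖Q‖`.
Composing `Q` with a norming functional of `Q x₀` produces a scalar polynomial that still
strongly attains its norm at `x₀`, so `x₀ ∈ ρ̃𝒫(ᵏX)`, and `‖P x₀‖ ≥ ‖Q x₀‖ - ε ≥ ‖P‖ - 2ε`. -/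

section SupNorm

variable {X Y Z : Type*} [NormedAddCommGroup X] [NormedAddCommGroup Y] [NormedAddCommGroup Z]

lemma norm_le_supNorm {f : X → Y} (hf : BddAbove ((fun x => ‖f x‖) '' closedBall (0 : X) 1))
    {x : X} (hx : x ∈ closedBall (0 : X) 1) : ‖f x‖ ≤ supNorm f :=
  le_csSup hf ⟨x, hx, rfl⟩

lemma supNorm_le {f : X → Y} {a : ℝ} (ha : ∀ x ∈ closedBall (0 : X) 1, ‖f x‖ ≤ a) :
    supNorm f ≤ a :=
  csSup_le ⟨‖f 0‖, 0, by simp, rfl⟩ (by rintro _ ⟨x, hx, rfl⟩; exact ha x hx)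

lemma supNorm_nonneg {f : X → Y} (hf : BddAbove ((fun x => ‖f x‖) '' closedBall (0 : X) 1)) :
    0 ≤ supNorm f :=
  (norm_nonneg _).trans (norm_le_supNorm hf (x := 0) (by simp))

lemma supNorm_le_supNorm_add {f g : X → Y}
    (hg : BddAbove ((fun x => ‖g x‖) '' closedBall (0 : X) 1)) {ε : ℝ}
    (hfg : ∀ x ∈ closedBall (0 : X) 1, ‖f x - g x‖ ≤ ε) :
    supNorm f ≤ supNorm g + ε :=
  supNorm_le fun x hx => calc
    ‖f x‖ ≤ ‖g x‖ + ‖f x - g x‖ := norm_le_norm_add_norm_sub' (f x) (g x)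
    _ ≤ supNorm g + ε := add_le_add (norm_le_supNorm hg hx) (hfg x hx)

lemma exists_seq_tendsto_supNorm {f : X → Y}
    (hf : BddAbove ((fun x => ‖f x‖) '' closedBall (0 : X) 1)) :
    ∃ xs : ℕ → X, (∀ n, xs n ∈ closedBall (0 : X) 1) ∧
      Tendsto (fun n => ‖f (xs n)‖) atTop (𝓝 (supNorm f)) := by
  obtain ⟨u, -, hu, hu_mem⟩ := exists_seq_tendsto_sSup
    ((nonempty_closedBall.2 zero_le_one).image _) hf
  choose xs hxs hxs_eq using hu_mem
  exact ⟨xs, hxs, by simp only [hxs_eq]; exact hu⟩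

variable {𝕂 : Type*} [RCLike 𝕂] [NormedSpace 𝕂 X]

lemma StronglyAttains.exists_norm_smul_eq_supNorm {f : X → Y} {x₀ : X}
    (hf : StronglyAttains 𝕂 f x₀) (hcont : Continuous f)
    (hbdd : BddAbove ((fun x => ‖f x‖) '' closedBall (0 : X) 1)) :
    ∃ α : 𝕂, ‖α‖ = 1 ∧ α • x₀ ∈ closedBall (0 : X) 1 ∧ ‖f (α • x₀)‖ = supNorm f := by
  obtain ⟨xs, hxs, hmax⟩ := exists_seq_tendsto_supNorm hbdd
  obtain ⟨α, φ, hφ, hα, hlim⟩ := hf xs hxs hmax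
  refine ⟨α, hα, isClosed_closedBall.mem_of_tendsto hlim (.of_forall fun n => hxs _), ?_⟩
  exact tendsto_nhds_unique ((hcont.tendsto _).comp hlim).norm (hmax.comp hφ.tendsto_atTop)

/-- Maximizing sequences of `g` are maximizing for `f`. -/
lemma StronglyAttains.of_norm_le {f : X → Y} {g : X → Z} {x₀ : X}
    (hf : StronglyAttains 𝕂 f x₀) (hbdd : BddAbove ((fun x => ‖f x‖) '' closedBall (0 : X) 1))
    (hgf : ∀ x ∈ closedBall (0 : X) 1, ‖g x‖ ≤ ‖f x‖) (hsup : supNorm g = supNorm f) :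
    StronglyAttains 𝕂 g x₀ := by
  intro ys hys hmax
  rw [hsup] at hmax
  refine hf ys hys (tendsto_of_tendsto_of_tendsto_of_le_of_le hmax tendsto_const_nhds ?_ ?_)
  · exact fun n => hgf _ (hys n)
  · exact fun n => norm_le_supNorm hbdd (hys n)

end SupNorm

section Polynomial

variable {𝕂 X Y : Type*} [RCLike 𝕂] [NormedAddCommGroup X] [NormedSpace 𝕂 X]
  [NormedAddCommGroup Y] [NormedSpace 𝕂 Y] {k : ℕ}

lemma continuous_polyEval (P : ContinuousMultilinearMap 𝕂 (fun _ : Fin k => X) Y) :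
    Continuous (polyEval P) :=
  P.cont.comp (continuous_pi fun _ => continuous_id)

lemma polyEval_smul (P : ContinuousMultilinearMap 𝕂 (fun _ : Fin k => X) Y) (c : 𝕂) (x : X) :
    polyEval P (c • x) = c ^ k • polyEval P x := by
  simpa [polyEval] using P.map_smul_univ (fun _ => c) (fun _ => x)

lemma norm_polyEval_le_opNorm (P : ContinuousMultilinearMap 𝕂 (fun _ : Fin k => X) Y)
    {x : X} (hx : x ∈ closedBall (0 : X) 1) : ‖polyEval P x‖ ≤ ‖P‖ := by
  have hx : ‖x‖ ≤ 1 := by simpa using hx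
  calc ‖polyEval P x‖ ≤ ‖P‖ * ∏ _i : Fin k, ‖x‖ := P.le_opNorm _
    _ ≤ ‖P‖ * 1 := by
      gcongr
      exact Finset.prod_le_one (fun _ _ => norm_nonneg x) fun _ _ => hx
    _ = ‖P‖ := mul_one _

lemma bddAbove_norm_polyEval_image (P : ContinuousMultilinearMap 𝕂 (fun _ : Fin k => X) Y)
    {s : Set X} (hs : s ⊆ closedBall (0 : X) 1) :
    BddAbove ((fun x => ‖polyEval P x‖) '' s) :=
  ⟨‖P‖, by rintro _ ⟨x, hx, rfl⟩; exact norm_polyEval_le_opNorm P (hs hx)⟩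

lemma StronglyAttains.norm_polyEval_eq_supNorm
    {Q : ContinuousMultilinearMap 𝕂 (fun _ : Fin k => X) Y} {x₀ : X}
    (hQ : StronglyAttains 𝕂 (polyEval Q) x₀) :
    x₀ ∈ closedBall (0 : X) 1 ∧ ‖polyEval Q x₀‖ = supNorm (polyEval Q) := by
  obtain ⟨α, hα, hαx₀, hmax⟩ := hQ.exists_norm_smul_eq_supNorm (continuous_polyEval Q)
    (bddAbove_norm_polyEval_image Q subset_rfl)
  rw [polyEval_smul, norm_smul, norm_pow, hα, one_pow, one_mul] at hmax
  rw [mem_closedBall_zero_iff, norm_smul, hα, one_mul] at hαx₀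
  exact ⟨mem_closedBall_zero_iff.2 hαx₀, hmax⟩

lemma StronglyAttains.mem_polyAttainPts
    {Q : ContinuousMultilinearMap 𝕂 (fun _ : Fin k => X) Y} {x₀ : X}
    (hQ : StronglyAttains 𝕂 (polyEval Q) x₀) (hQ_pos : 0 < supNorm (polyEval Q)) :
    x₀ ∈ polyAttainPts 𝕂 X k := by
  obtain ⟨hx₀, hQx₀⟩ := hQ.norm_polyEval_eq_supNorm
  have hQx₀_ne : ‖polyEval Q x₀‖ ≠ 0 := hQx₀ ▸ hQ_pos.ne'
  obtain ⟨g, hg, hgQx₀⟩ := exists_dual_vector 𝕂 (polyEval Q x₀) hQx₀_ne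
  let L := g.compContinuousMultilinearMap Q
  have hLQ : ∀ x, ‖polyEval L x‖ ≤ ‖polyEval Q x‖ := fun x =>
    (g.le_opNorm (polyEval Q x)).trans_eq (by rw [hg, one_mul])
  have hLx₀ : ‖polyEval L x₀‖ = supNorm (polyEval Q) := by
    change ‖g (polyEval Q x₀)‖ = _
    rw [hgQx₀, RCLike.norm_ofReal, abs_norm, hQx₀]
  have hLsup : supNorm (polyEval L) = supNorm (polyEval Q) :=
    le_antisymm
      (supNorm_le fun x hx => (hLQ x).trans
        (norm_le_supNorm (bddAbove_norm_polyEval_image Q subset_rfl) hx))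
      (hLx₀ ▸ norm_le_supNorm (bddAbove_norm_polyEval_image L subset_rfl) hx₀)
  refine ⟨hx₀, L, fun hL => ?_, ?_⟩
  · rw [hL, Pi.zero_apply, norm_zero] at hLx₀
    exact hQ_pos.ne hLx₀
  · exact hQ.of_norm_le (bddAbove_norm_polyEval_image Q subset_rfl) (fun x _ => hLQ x) hLsup

end Polynomial

theorem statement3_general {𝕂 X Y : Type*} [RCLike 𝕂] [NormedAddCommGroup X] [NormedSpace 𝕂 X]
    [NormedAddCommGroup Y] [NormedSpace 𝕂 Y] {k : ℕ}
    (happrox : ∀ P : ContinuousMultilinearMap 𝕂 (fun _ : Fin k => X) Y, ∀ ε > (0 : ℝ),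
      ∃ (Q : ContinuousMultilinearMap 𝕂 (fun _ : Fin k => X) Y) (x₀ : X),
        StronglyAttains 𝕂 (polyEval Q) x₀ ∧
          ∀ x ∈ Metric.closedBall (0 : X) 1, ‖polyEval P x - polyEval Q x‖ ≤ ε) :
    ∀ P : ContinuousMultilinearMap 𝕂 (fun _ : Fin k => X) Y,
      supNorm (polyEval P) = sSup ((fun x => ‖polyEval P x‖) '' polyAttainPts 𝕂 X k) := by
  intro P
  set S := sSup ((fun x => ‖polyEval P x‖) '' polyAttainPts 𝕂 X k)
  have hA : polyAttainPts 𝕂 X k ⊆ closedBall (0 : X) 1 := fun x hx => hx.1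
  have hP_bdd := bddAbove_norm_polyEval_image P subset_rfl
  have hS_le : S ≤ supNorm (polyEval P) :=
    Real.sSup_le (by rintro _ ⟨x, hx, rfl⟩; exact norm_le_supNorm hP_bdd (hA hx))
      (supNorm_nonneg hP_bdd)
  have hS_nonneg : 0 ≤ S := Real.sSup_nonneg (by rintro _ ⟨x, -, rfl⟩; exact norm_nonneg _)
  refine le_antisymm (le_of_forall_pos_le_add fun ε hε => ?_) hS_le
  obtain ⟨Q, x₀, hQ, hPQ⟩ := happrox P (ε / 2) (half_pos hε)
  have hQ_bdd := bddAbove_norm_polyEval_image Q subset_rfl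
  have hP_le := supNorm_le_supNorm_add hQ_bdd hPQ
  rcases (supNorm_nonneg hQ_bdd).eq_or_lt with hQ_zero | hQ_pos
  · linarith
  obtain ⟨hx₀, hQx₀⟩ := hQ.norm_polyEval_eq_supNorm
  have hPx₀ : ‖polyEval P x₀‖ ≤ S :=
    le_csSup (bddAbove_norm_polyEval_image P hA) ⟨x₀, hQ.mem_polyAttainPts hQ_pos, rfl⟩
  linarith [norm_le_norm_add_norm_sub (polyEval P x₀) (polyEval Q x₀), hPQ x₀ hx₀]

/-- if every bounded `k`-homogeneous polynomial `X → Y` can be approximated in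
norm by strongly norm-attaining ones, then `ρ̃𝒫(ᵏX)` is a norming set for `𝒫(ᵏX : Y)`. -/
theorem statement3 {𝕂 X Y : Type*} [RCLike 𝕂] [NormedAddCommGroup X] [NormedSpace 𝕂 X]
    [NormedAddCommGroup Y] [NormedSpace 𝕂 Y] [CompleteSpace X] [CompleteSpace Y]
    {k : ℕ} (hk : 1 ≤ k)
    (happrox : ∀ P : ContinuousMultilinearMap 𝕂 (fun _ : Fin k => X) Y, ∀ ε > (0 : ℝ),
      ∃ (Q : ContinuousMultilinearMap 𝕂 (fun _ : Fin k => X) Y) (x₀ : X),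
        StronglyAttains 𝕂 (polyEval Q) x₀ ∧
          ∀ x ∈ Metric.closedBall (0 : X) 1, ‖polyEval P x - polyEval Q x‖ ≤ ε) :
    ∀ P : ContinuousMultilinearMap 𝕂 (fun _ : Fin k => X) Y,
      supNorm (polyEval P) = sSup ((fun x => ‖polyEval P x‖) '' polyAttainPts 𝕂 X k) :=
  statement3_general happrox
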